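/- For every formal power series as above and every j ≥ 1, the j-th derivative R^(j)(x) can be written as P_j(x, R(x)) / (x^j · (1 − R(x))^(2j−1)) for some polynomial P_j; in particular, x^j·(1−R(x))^(2j−1)·R^(j)(x) is a polynomial expression in x and R(x). -/

import Mathlib

/-!
Differentiating `R = X · exp(R)` by the chain rule gives `R' = exp(R) + X·exp(R)·R'`, i.e. the
first-order equation `X (1 - R) R' = R`. Hence the derivation `δ = X (1 - R) d/dX` maps `X` and `R`
into the algebra `ℚ[X, R]` they generate, and therefore preserves that algebra. Writing
`F_j = X^j (1 - R)^(2j-1) R^(j)`, a direct computation using `X (1 - R) R' = R` gives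
`F_(j+1) = (1 - R) δ F_j - (j (1 - R)^2 - (2j - 1) R) F_j`, so `F_j ∈ ℚ[X, R]` by induction
from `F_1 = R`.
-/

/-- Composition `Φ(R)` of formal power series, valid when `R` has zero constant term. -/
noncomputable def psComp {K : Type*} [CommRing K] (Φ R : PowerSeries K) : PowerSeries K :=
  PowerSeries.mk fun m => ∑ k ∈ Finset.range (m + 1),
    (PowerSeries.coeff k Φ) * PowerSeries.coeff m (R ^ k)

open PowerSeries

theorem Derivation.map_mem_adjoin {R A : Type*} [CommSemiring R] [CommSemiring A] [Algebra R A]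
    (D : Derivation R A A) {s : Set A} (hs : ∀ x ∈ s, D x ∈ Algebra.adjoin R s) {a : A}
    (ha : a ∈ Algebra.adjoin R s) : D a ∈ Algebra.adjoin R s := by
  induction ha using Algebra.adjoin_induction with
  | mem x hx => exact hs x hx
  | algebraMap r => simp
  | add x y _ _ hDx hDy => simpa using add_mem hDx hDy
  | mul x y hx hy hDx hDy => simpa using add_mem (mul_mem hx hDy) (mul_mem hy hDx)

section

variable {K : Type*} [CommRing K]

theorem PowerSeries.coeff_pow_eq_zero_of_lt {f : K⟦X⟧} (hf : constantCoeff f = 0) {k m : ℕ}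
    (h : m < k) : coeff m (f ^ k) = 0 :=
  X_pow_dvd_iff.mp (pow_dvd_pow_of_dvd (X_dvd_iff.mpr hf) k) m h

theorem psComp_eq_subst (Φ : K⟦X⟧) {f : K⟦X⟧} (hf : constantCoeff f = 0) :
    psComp Φ f = Φ.subst f := by
  ext m
  rw [psComp, coeff_mk, coeff_subst' (HasSubst.of_constantCoeff_zero' hf),
    finsum_eq_sum_of_support_subset _ (s := Finset.range (m + 1))]
  · simp only [smul_eq_mul]
  · intro k hk
    by_contra hkm
    simp only [Finset.coe_range, Set.mem_Iio, not_lt] at hkm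
    exact hk (by simp [coeff_pow_eq_zero_of_lt hf (Nat.lt_of_succ_le hkm)])

theorem one_sub_mul_X_mul_one_sub_mul_derivative_X_pow_mul (f g : K⟦X⟧)
    (hf : X * (1 - f) * d⁄dX K f = f) (i : ℕ) :
    (1 - f) * (X * (1 - f) * d⁄dX K (X ^ (i + 1) * (1 - f) ^ (2 * i + 1) * g)) =
      X ^ (i + 2) * (1 - f) ^ (2 * i + 3) * d⁄dX K g +
        (((i : K⟦X⟧) + 1) * (1 - f) ^ 2 - (2 * (i : K⟦X⟧) + 1) * f) *
          (X ^ (i + 1) * (1 - f) ^ (2 * i + 1) * g) := by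
  simp only [Derivation.leibniz, derivative_pow, map_sub, Derivation.map_one_eq_zero, derivative_X,
    smul_eq_mul, Nat.add_sub_cancel]
  push_cast
  linear_combination (-(2 * (i : K⟦X⟧) + 1) * X ^ (i + 1) * (1 - f) ^ (2 * i + 1) * g) * hf

end

section TreeFunction

variable {A : Type*} [CommRing A] [Algebra ℚ A] {R : A⟦X⟧}

theorem X_mul_one_sub_mul_derivative_eq_self (h0 : constantCoeff R = 0)
    (hR : R = X * psComp (exp A) R) : X * (1 - R) * d⁄dX A R = R := by
  rw [psComp_eq_subst _ h0] at hR
  set E := (exp A).subst R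
  have hE : d⁄dX A E = E * d⁄dX A R := by
    rw [derivative_subst (HasSubst.of_constantCoeff_zero' h0), derivative_exp]
  have hR' : d⁄dX A R = E + X * (E * d⁄dX A R) := by
    conv_lhs => rw [hR]
    rw [Derivation.leibniz, derivative_X, hE, smul_eq_mul, smul_eq_mul]
    ring
  linear_combination X * hR' - (X * d⁄dX A R + 1) * hR

theorem X_mul_one_sub_mul_derivative_mem_adjoin (h0 : constantCoeff R = 0)
    (hR : R = X * psComp (exp A) R) {a : A⟦X⟧}
    (ha : a ∈ Algebra.adjoin A (Set.range ![X, R])) :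
    X * (1 - R) * d⁄dX A a ∈ Algebra.adjoin A (Set.range ![X, R]) := by
  have hX : X ∈ Algebra.adjoin A (Set.range ![X, R]) := Algebra.subset_adjoin ⟨0, rfl⟩
  have hR_mem : R ∈ Algebra.adjoin A (Set.range ![X, R]) := Algebra.subset_adjoin ⟨1, rfl⟩
  refine ((X * (1 - R)) • d⁄dX A).map_mem_adjoin ?_ ha
  rintro _ ⟨i, rfl⟩
  fin_cases i
  · simpa using mul_mem hX (sub_mem (one_mem _) hR_mem)
  · simpa [X_mul_one_sub_mul_derivative_eq_self h0 hR] using hR_mem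

theorem X_pow_mul_one_sub_pow_mul_iterate_derivative_mem_adjoin (h0 : constantCoeff R = 0)
    (hR : R = X * psComp (exp A) R) (i : ℕ) :
    X ^ (i + 1) * (1 - R) ^ (2 * i + 1) * (d⁄dX A)^[i + 1] R ∈
      Algebra.adjoin A (Set.range ![X, R]) := by
  have hR_mem : R ∈ Algebra.adjoin A (Set.range ![X, R]) := Algebra.subset_adjoin ⟨1, rfl⟩
  have h1R : 1 - R ∈ Algebra.adjoin A (Set.range ![X, R]) := sub_mem (one_mem _) hR_mem
  induction i with
  | zero => simpa [X_mul_one_sub_mul_derivative_eq_self h0 hR] using hR_mem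
  | succ i ih =>
    have hrec := one_sub_mul_X_mul_one_sub_mul_derivative_X_pow_mul R ((d⁄dX A)^[i + 1] R)
      (X_mul_one_sub_mul_derivative_eq_self h0 hR) i
    rw [← Function.iterate_succ_apply' (d⁄dX A)] at hrec
    rw [show 2 * (i + 1) + 1 = 2 * i + 3 by ring, eq_sub_of_add_eq hrec.symm]
    have hcoeff : ((i : A⟦X⟧) + 1) * (1 - R) ^ 2 - (2 * (i : A⟦X⟧) + 1) * R ∈
        Algebra.adjoin A (Set.range ![X, R]) :=
      sub_mem (mul_mem (add_mem (natCast_mem _ i) (one_mem _)) (pow_mem h1R 2))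
        (mul_mem (add_mem (mul_mem (natCast_mem _ 2) (natCast_mem _ i)) (one_mem _)) hR_mem)
    exact sub_mem (mul_mem h1R (X_mul_one_sub_mul_derivative_mem_adjoin h0 hR ih))
      (mul_mem hcoeff ih)

end TreeFunction

theorem tree_function_higher_derivatives_general (R : PowerSeries ℚ)
    (h0 : PowerSeries.constantCoeff R = 0)
    (hR : R = PowerSeries.X * psComp (PowerSeries.exp ℚ) R)
    (j : ℕ) :
    ∃ P : MvPolynomial (Fin 2) ℚ,
      PowerSeries.X ^ j * (1 - R) ^ (2 * j - 1) * (PowerSeries.derivativeFun^[j] R) =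
        MvPolynomial.aeval ![PowerSeries.X, R] P := by
  suffices h : X ^ j * (1 - R) ^ (2 * j - 1) * (d⁄dX ℚ)^[j] R ∈
      Algebra.adjoin ℚ (Set.range ![X, R]) by
    rw [Algebra.adjoin_range_eq_range_aeval] at h
    obtain ⟨P, hP⟩ := h
    exact ⟨P, hP.symm⟩
  cases j with
  | zero => simpa using Algebra.subset_adjoin (R := ℚ) (s := Set.range ![X, R]) ⟨1, rfl⟩
  | succ i =>
    simpa [show 2 * (i + 1) - 1 = 2 * i + 1 by omega] using
      X_pow_mul_one_sub_pow_mul_iterate_derivative_mem_adjoin h0 hR i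

/-- For the tree function `R` (with `R(0) = 0` and `R = x·exp(R)`) and every `j ≥ 1`,
`x^j·(1−R)^(2j−1)·R^(j)(x)` is a polynomial expression `P_j(x, R(x))` in `x` and `R(x)`,
i.e. the `j`-th derivative `R^(j)` equals `P_j(x,R(x)) / (x^j (1−R)^(2j−1))`. -/
theorem tree_function_higher_derivatives (R : PowerSeries ℚ)
    (h0 : PowerSeries.constantCoeff R = 0)
    (hR : R = PowerSeries.X * psComp (PowerSeries.exp ℚ) R)
    (j : ℕ) (hj : 1 ≤ j) :
    ∃ P : MvPolynomial (Fin 2) ℚ,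
      PowerSeries.X ^ j * (1 - R) ^ (2 * j - 1) * (PowerSeries.derivativeFun^[j] R) =
        MvPolynomial.aeval ![PowerSeries.X, R] P :=
  tree_function_higher_derivatives_general R h0 hR j
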